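/- arXiv:0907.2572 — 2 statements merged into one kernel-verified Lean document; each statement's English description precedes it below -/
import Mathlib

section
/- Let ρ, θ > 0 and let T₂, T₃, T₄ be independent random variables with T₂ ~ Exp(1), T₃ ~ Exp(3), T₄ ~ Exp(6). Then (θ²/ρ²)·(1/18)·( 8·𝔼[(1−e^{−ρ(T₃+T₄)})(1−e^{−ρ(T₂+T₃+T₄)})] + 4·𝔼[(1−e^{−ρT₄})(1−e^{−ρ(T₂+T₃+T₄)})] + 2·𝔼[(1−e^{−ρT₄})(1−e^{−ρ(T₃+T₄)})] + 4·𝔼[(1−e^{−ρ(T₂+T₃+T₄)})²] ) − θ²/(1+ρ)² = 2θ²/((1+ρ)²(3+ρ)(1+2ρ)(3+2ρ)). (Key computation in the proof of Proposition 5.8: averaging 𝔼[|𝒢_i∖𝒢_j| | 𝒯]·𝔼[|𝒢_k∖𝒢_l| | 𝒯] over the 18 equally likely topologies of the Kingman coalescent of four individuals, where T₂, T₃, T₄ are the times during which the coalescent has 2, 3 and 4 lines, yields the θ²-part of COV[|𝒢_i∖𝒢_j|, |𝒢_k∖𝒢_l|].) -/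
/-!
Expanding `(1 - e^{-U})(1 - e^{-V}) = 1 - e^{-U} - e^{-V} + e^{-(U+V)}`, every expectation in
the statement becomes a Laplace transform `𝔼[e^{-(a T₂ + b T₃ + c T₄)}]` with `a, b, c ≥ 0`,
which by independence factorises as `1/(1+a) · 3/(3+b) · 6/(6+c)`. The claim is then an identity
of rational functions of `ρ`.
-/

open MeasureTheory ProbabilityTheory Real Set

namespace ProbabilityTheory

lemma expMeasure_eq_withDensity (r : ℝ) :
    expMeasure r = volume.withDensity (fun x => ENNReal.ofReal (exponentialPDFReal r x)) := rfl

instance instSFiniteExpMeasure (r : ℝ) : SFinite (expMeasure r) := by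
  rw [expMeasure_eq_withDensity]; infer_instance

lemma integral_expMeasure_eq_integral_exponentialPDFReal_mul {r : ℝ} (hr : 0 < r) (g : ℝ → ℝ) :
    ∫ x, g x ∂expMeasure r = ∫ x, exponentialPDFReal r x * g x := by
  rw [expMeasure_eq_withDensity,
    integral_withDensity_eq_integral_toReal_smul
    (measurable_exponentialPDFReal r).ennreal_ofReal (ae_of_all _ fun _ => ENNReal.ofReal_lt_top)]
  simp_rw [ENNReal.toReal_ofReal (exponentialPDFReal_nonneg hr _), smul_eq_mul]

lemma integrable_expMeasure_iff {r : ℝ} (hr : 0 < r) {g : ℝ → ℝ} :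
    Integrable g (expMeasure r) ↔ Integrable (fun x => exponentialPDFReal r x * g x) := by
  rw [expMeasure_eq_withDensity, integrable_withDensity_iff_integrable_smul'
    (measurable_exponentialPDFReal r).ennreal_ofReal (ae_of_all _ fun _ => ENNReal.ofReal_lt_top)]
  simp_rw [ENNReal.toReal_ofReal (exponentialPDFReal_nonneg hr _), smul_eq_mul]

lemma exponentialPDFReal_mul_exp_neg_mul (r c x : ℝ) :
    exponentialPDFReal r x * exp (-(c * x)) =
      (Ici 0).indicator (fun x => r * exp (-(r + c) * x)) x := by
  by_cases hx : 0 ≤ x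
  · rw [indicator_of_mem (mem_Ici.mpr hx), exponentialPDFReal, gammaPDFReal, if_pos hx,
      mul_assoc, ← exp_add]
    simp only [rpow_one, Gamma_one, div_one, sub_self, rpow_zero, mul_one]
    ring_nf
  · rw [indicator_of_notMem (by simpa using hx), exponentialPDFReal, gammaPDFReal, if_neg hx,
      zero_mul]

lemma integrable_exp_neg_mul_expMeasure {r c : ℝ} (hr : 0 < r) (hc : -r < c) :
    Integrable (fun x => exp (-(c * x))) (expMeasure r) := by
  rw [integrable_expMeasure_iff hr]
  simp_rw [exponentialPDFReal_mul_exp_neg_mul]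
  rw [integrable_indicator_iff measurableSet_Ici, integrableOn_Ici_iff_integrableOn_Ioi]
  exact (integrableOn_exp_mul_Ioi (by linarith) 0).const_mul r

lemma integral_exp_neg_mul_expMeasure {r c : ℝ} (hr : 0 < r) (hc : -r < c) :
    ∫ x, exp (-(c * x)) ∂expMeasure r = r / (r + c) := by
  rw [integral_expMeasure_eq_integral_exponentialPDFReal_mul hr]
  simp_rw [exponentialPDFReal_mul_exp_neg_mul]
  rw [integral_indicator measurableSet_Ici, integral_Ici_eq_integral_Ioi, integral_const_mul,
    integral_exp_mul_Ioi (by linarith) 0, mul_zero, exp_zero, neg_div_neg_eq, mul_one_div]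

lemma exp_neg_linear_eq_mul (a b c : ℝ) (p : ℝ × ℝ × ℝ) :
    exp (-(a * p.1 + b * p.2.1 + c * p.2.2)) =
      exp (-(a * p.1)) * (exp (-(b * p.2.1)) * exp (-(c * p.2.2))) := by
  rw [← exp_add, ← exp_add]
  ring_nf

lemma integral_one_sub_exp_neg_mul_one_sub_exp_neg {Ω : Type*} [MeasurableSpace Ω]
    {μ : Measure Ω} [IsProbabilityMeasure μ] {X Y : Ω → ℝ}
    (hX : Integrable (fun ω => exp (-X ω)) μ) (hY : Integrable (fun ω => exp (-Y ω)) μ)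
    (hXY : Integrable (fun ω => exp (-(X ω + Y ω))) μ) :
    ∫ ω, (1 - exp (-X ω)) * (1 - exp (-Y ω)) ∂μ =
      1 - ∫ ω, exp (-X ω) ∂μ - ∫ ω, exp (-Y ω) ∂μ + ∫ ω, exp (-(X ω + Y ω)) ∂μ := by
  have expand : ∀ ω, (1 - exp (-X ω)) * (1 - exp (-Y ω)) =
      1 - exp (-X ω) - exp (-Y ω) + exp (-(X ω + Y ω)) := fun ω => by
    rw [neg_add, exp_add]; ring
  simp_rw [expand]
  rw [integral_add (by fun_prop) hXY, integral_sub (by fun_prop) hY,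
    integral_sub (integrable_const 1) hX, integral_const, probReal_univ, one_smul]

section HoldingTimes

variable {r₁ r₂ r₃ : ℝ} {X Y : ℝ × ℝ × ℝ → ℝ}

lemma integrable_exp_neg_prod_expMeasure_of_linear (hr₁ : 0 < r₁) (hr₂ : 0 < r₂) (hr₃ : 0 < r₃)
    {a b c : ℝ} (ha : -r₁ < a) (hb : -r₂ < b) (hc : -r₃ < c)
    (hX : ∀ p, X p = a * p.1 + b * p.2.1 + c * p.2.2) :
    Integrable (fun p => exp (-X p))
      ((expMeasure r₁).prod ((expMeasure r₂).prod (expMeasure r₃))) := by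
  simp only [hX, exp_neg_linear_eq_mul]
  exact (integrable_exp_neg_mul_expMeasure hr₁ ha).mul_prod
    ((integrable_exp_neg_mul_expMeasure hr₂ hb).mul_prod (integrable_exp_neg_mul_expMeasure hr₃ hc))

lemma integral_exp_neg_prod_expMeasure_of_linear (hr₁ : 0 < r₁) (hr₂ : 0 < r₂) (hr₃ : 0 < r₃)
    {a b c : ℝ} (ha : -r₁ < a) (hb : -r₂ < b) (hc : -r₃ < c)
    (hX : ∀ p, X p = a * p.1 + b * p.2.1 + c * p.2.2) :
    ∫ p, exp (-X p) ∂((expMeasure r₁).prod ((expMeasure r₂).prod (expMeasure r₃))) =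
      r₁ / (r₁ + a) * (r₂ / (r₂ + b)) * (r₃ / (r₃ + c)) := by
  simp only [hX, exp_neg_linear_eq_mul]
  rw [integral_prod_mul (fun x => exp (-(a * x)))
      (fun q : ℝ × ℝ => exp (-(b * q.1)) * exp (-(c * q.2))),
    integral_prod_mul (fun x => exp (-(b * x))) (fun x => exp (-(c * x))),
    integral_exp_neg_mul_expMeasure hr₁ ha, integral_exp_neg_mul_expMeasure hr₂ hb,
    integral_exp_neg_mul_expMeasure hr₃ hc, mul_assoc]

lemma integral_one_sub_exp_neg_mul_one_sub_exp_neg_prod_expMeasure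
    (hr₁ : 0 < r₁) (hr₂ : 0 < r₂) (hr₃ : 0 < r₃) (a b c a' b' c' : ℝ)
    (ha : 0 ≤ a) (hb : 0 ≤ b) (hc : 0 ≤ c) (ha' : 0 ≤ a') (hb' : 0 ≤ b') (hc' : 0 ≤ c')
    (hX : ∀ p, X p = a * p.1 + b * p.2.1 + c * p.2.2)
    (hY : ∀ p, Y p = a' * p.1 + b' * p.2.1 + c' * p.2.2) :
    ∫ p, (1 - exp (-X p)) * (1 - exp (-Y p))
        ∂((expMeasure r₁).prod ((expMeasure r₂).prod (expMeasure r₃))) =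
      1 - r₁ / (r₁ + a) * (r₂ / (r₂ + b)) * (r₃ / (r₃ + c))
        - r₁ / (r₁ + a') * (r₂ / (r₂ + b')) * (r₃ / (r₃ + c'))
        + r₁ / (r₁ + (a + a')) * (r₂ / (r₂ + (b + b'))) * (r₃ / (r₃ + (c + c'))) := by
  have hXY p : X p + Y p = (a + a') * p.1 + (b + b') * p.2.1 + (c + c') * p.2.2 := by
    rw [hX, hY]; ring
  have laplace {Z : ℝ × ℝ × ℝ → ℝ} {a b c : ℝ} (ha : 0 ≤ a) (hb : 0 ≤ b) (hc : 0 ≤ c)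
      (hZ : ∀ p, Z p = a * p.1 + b * p.2.1 + c * p.2.2) :=
    And.intro
      (integrable_exp_neg_prod_expMeasure_of_linear hr₁ hr₂ hr₃
        (by linarith) (by linarith) (by linarith) hZ)
      (integral_exp_neg_prod_expMeasure_of_linear hr₁ hr₂ hr₃
        (by linarith) (by linarith) (by linarith) hZ)
  obtain ⟨integrable_X, integral_X⟩ := laplace ha hb hc hX
  obtain ⟨integrable_Y, integral_Y⟩ := laplace ha' hb' hc' hY
  obtain ⟨integrable_XY, integral_XY⟩ :=
    laplace (add_nonneg ha ha') (add_nonneg hb hb') (add_nonneg hc hc') hXY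
  have := isProbabilityMeasure_expMeasure hr₁
  have := isProbabilityMeasure_expMeasure hr₂
  have := isProbabilityMeasure_expMeasure hr₃
  rw [integral_one_sub_exp_neg_mul_one_sub_exp_neg integrable_X integrable_Y integrable_XY,
    integral_X, integral_Y, integral_XY]

lemma integral_one_sub_exp_neg_sq_prod_expMeasure
    (hr₁ : 0 < r₁) (hr₂ : 0 < r₂) (hr₃ : 0 < r₃) (a b c : ℝ)
    (ha : 0 ≤ a) (hb : 0 ≤ b) (hc : 0 ≤ c) (hX : ∀ p, X p = a * p.1 + b * p.2.1 + c * p.2.2) :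
    ∫ p, (1 - exp (-X p)) ^ 2 ∂((expMeasure r₁).prod ((expMeasure r₂).prod (expMeasure r₃))) =
      1 - 2 * (r₁ / (r₁ + a) * (r₂ / (r₂ + b)) * (r₃ / (r₃ + c)))
        + r₁ / (r₁ + 2 * a) * (r₂ / (r₂ + 2 * b)) * (r₃ / (r₃ + 2 * c)) := by
  simp only [sq, integral_one_sub_exp_neg_mul_one_sub_exp_neg_prod_expMeasure hr₁ hr₂ hr₃
    a b c a b c ha hb hc ha hb hc hX hX]
  ring

end HoldingTimes

end ProbabilityTheory

theorem four_individuals_covariance_term_general (θ ρ : ℝ) (hρ : 0 < ρ) :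
    θ ^ 2 / ρ ^ 2 * (1 / 18) *
      (8 * (∫ p : ℝ × ℝ × ℝ, (1 - Real.exp (-ρ * (p.2.1 + p.2.2))) *
            (1 - Real.exp (-ρ * (p.1 + p.2.1 + p.2.2)))
          ∂((expMeasure 1).prod ((expMeasure 3).prod (expMeasure 6)))) +
        4 * (∫ p : ℝ × ℝ × ℝ, (1 - Real.exp (-ρ * p.2.2)) *
            (1 - Real.exp (-ρ * (p.1 + p.2.1 + p.2.2)))
          ∂((expMeasure 1).prod ((expMeasure 3).prod (expMeasure 6)))) +
        2 * (∫ p : ℝ × ℝ × ℝ, (1 - Real.exp (-ρ * p.2.2)) *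
            (1 - Real.exp (-ρ * (p.2.1 + p.2.2)))
          ∂((expMeasure 1).prod ((expMeasure 3).prod (expMeasure 6)))) +
        4 * (∫ p : ℝ × ℝ × ℝ, (1 - Real.exp (-ρ * (p.1 + p.2.1 + p.2.2))) ^ 2
          ∂((expMeasure 1).prod ((expMeasure 3).prod (expMeasure 6))))) -
      θ ^ 2 / (1 + ρ) ^ 2 =
    2 * θ ^ 2 / ((1 + ρ) ^ 2 * (3 + ρ) * (1 + 2 * ρ) * (3 + 2 * ρ)) := by
  have h₁ : (0 : ℝ) < 1 := one_pos
  have h₃ : (0 : ℝ) < 3 := by norm_num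
  have h₆ : (0 : ℝ) < 6 := by norm_num
  simp_rw [neg_mul]
  rw [integral_one_sub_exp_neg_mul_one_sub_exp_neg_prod_expMeasure h₁ h₃ h₆ 0 ρ ρ ρ ρ ρ,
    integral_one_sub_exp_neg_mul_one_sub_exp_neg_prod_expMeasure h₁ h₃ h₆ 0 0 ρ ρ ρ ρ,
    integral_one_sub_exp_neg_mul_one_sub_exp_neg_prod_expMeasure h₁ h₃ h₆ 0 0 ρ 0 ρ ρ,
    integral_one_sub_exp_neg_sq_prod_expMeasure h₁ h₃ h₆ ρ ρ ρ]
  · field_simp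
    ring
  -- the side goals left by `rw`: nonnegative weights and the exponents as linear forms
  all_goals first | positivity | intro p; ring

/-- Key computation in the proof of Proposition 5.8: averaging
`𝔼[|𝒢ᵢ∖𝒢ⱼ| | 𝒯]·𝔼[|𝒢ₖ∖𝒢ₗ| | 𝒯]` over the 18 equally likely topologies of the
Kingman coalescent of four individuals, where `T₂ ~ Exp(1)`, `T₃ ~ Exp(3)` and
`T₄ ~ Exp(6)` are the holding times with 2, 3 and 4 lines. -/
theorem four_individuals_covariance_term (θ ρ : ℝ) (hθ : 0 < θ) (hρ : 0 < ρ) :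
    θ ^ 2 / ρ ^ 2 * (1 / 18) *
      (8 * (∫ p : ℝ × ℝ × ℝ, (1 - Real.exp (-ρ * (p.2.1 + p.2.2))) *
            (1 - Real.exp (-ρ * (p.1 + p.2.1 + p.2.2)))
          ∂((expMeasure 1).prod ((expMeasure 3).prod (expMeasure 6)))) +
        4 * (∫ p : ℝ × ℝ × ℝ, (1 - Real.exp (-ρ * p.2.2)) *
            (1 - Real.exp (-ρ * (p.1 + p.2.1 + p.2.2)))
          ∂((expMeasure 1).prod ((expMeasure 3).prod (expMeasure 6)))) +
        2 * (∫ p : ℝ × ℝ × ℝ, (1 - Real.exp (-ρ * p.2.2)) *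
            (1 - Real.exp (-ρ * (p.2.1 + p.2.2)))
          ∂((expMeasure 1).prod ((expMeasure 3).prod (expMeasure 6)))) +
        4 * (∫ p : ℝ × ℝ × ℝ, (1 - Real.exp (-ρ * (p.1 + p.2.1 + p.2.2))) ^ 2
          ∂((expMeasure 1).prod ((expMeasure 3).prod (expMeasure 6))))) -
      θ ^ 2 / (1 + ρ) ^ 2 =
    2 * θ ^ 2 / ((1 + ρ) ^ 2 * (3 + ρ) * (1 + 2 * ρ) * (3 + 2 * ρ)) :=
  four_individuals_covariance_term_general θ ρ hρ
end

section
/- Let ρ, θ > 0 and let μ be the probability measure on ℕ obtained by drawing T from Exp(1) and then drawing G from the Poisson distribution with mean (θ/ρ)·(2 − e^{−ρT}). Then the mean of μ equals θ·(1/ρ + 1/(1+ρ)) = θ(1+2ρ)/(ρ(1+ρ)), and the variance of μ equals θ(1+2ρ)/(ρ(1+ρ)) + θ²/((1+ρ)²(1+2ρ)). (Theorem 4 for a sample of size n = 2: conditionally on the coalescence time T ~ Exp(1) of the two individuals, the size G = |𝒢₁ ∪ 𝒢₂| of the dispensable genome is Poisson with parameter (θ/ρ)e^{−ρT} + 2(θ/ρ)(1−e^{−ρT})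 = (θ/ρ)(2−e^{−ρT}), and its mean and variance are 𝔼_{n=2}[G] = θ Σ_{i=0}^{1} 1/(ρ+i) and 𝕍_{n=2}[G].) -/
/-!
Conditionally on `T = t`, `G` is Poisson with mean `λ(t) = (θ/ρ)(2 - e^{-ρt})`; the Poisson
factorial moments `E[G(G-1)⋯(G-k+1)] = λ^k` give `E[G | T] = λ(T)` and `E[G² | T] = λ(T)² + λ(T)`.
Both are quadratic polynomials in `e^{-ρT}`, and `E[e^{-aT}] = 1/(1+a)` for `T ~ Exp(1)`.
-/

open MeasureTheory ProbabilityTheory Real Set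
open scoped NNReal Nat

theorem Real.hasSum_descFactorial_mul_pow_div_factorial (k : ℕ) (x : ℝ) :
    HasSum (fun n : ℕ => (n.descFactorial k : ℝ) * (x ^ n / n !)) (x ^ k * exp x) := by
  rw [← hasSum_nat_add_iff' k]
  have hlow : ∑ i ∈ Finset.range k, (i.descFactorial k : ℝ) * (x ^ i / i !) = 0 :=
    Finset.sum_eq_zero fun i hi => by
      rw [Nat.descFactorial_of_lt (Finset.mem_range.mp hi), Nat.cast_zero, zero_mul]
  have hshift (n : ℕ) : ((n + k).descFactorial k : ℝ) * (x ^ (n + k) / (n + k)!) =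
      x ^ k * (x ^ n / n !) := by
    rw [← Nat.factorial_mul_ascFactorial n k, ← Nat.add_descFactorial_eq_ascFactorial]
    have : ((n + k).descFactorial k : ℝ) ≠ 0 := by
      exact_mod_cast (Nat.descFactorial_pos.mpr (by omega)).ne'
    push_cast
    field_simp
    ring
  simpa only [hlow, sub_zero, hshift, exp_eq_exp_ℝ] using
    (NormedSpace.expSeries_div_hasSum_exp x).mul_left (x ^ k)

theorem hasSum_descFactorial_poissonMeasure (r : ℝ≥0) (k : ℕ) :
    HasSum (fun n : ℕ => exp (-r) * r ^ n / n ! * n.descFactorial k) ((r : ℝ) ^ k) := by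
  have h := (Real.hasSum_descFactorial_mul_pow_div_factorial k r).mul_left (exp (-r))
  rw [mul_left_comm, ← exp_add, neg_add_cancel, exp_zero, mul_one] at h
  exact h.congr_fun fun n => by ring

theorem hasSum_natCast_poissonMeasure (r : ℝ≥0) :
    HasSum (fun n : ℕ => exp (-r) * r ^ n / n ! * n) (r : ℝ) := by
  simpa using hasSum_descFactorial_poissonMeasure r 1

theorem hasSum_natCast_sq_poissonMeasure (r : ℝ≥0) :
    HasSum (fun n : ℕ => exp (-r) * r ^ n / n ! * (n : ℝ) ^ 2) ((r : ℝ) ^ 2 + r) := by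
  convert (hasSum_descFactorial_poissonMeasure r 2).add
    (hasSum_natCast_poissonMeasure r) using 2 with n
  rw [Nat.descFactorial_succ, Nat.descFactorial_one]
  rcases n with _ | n <;> push_cast <;> ring

theorem integral_natCast_poissonMeasure (r : ℝ≥0) : ∫ n, (n : ℝ) ∂poissonMeasure r = r := by
  simpa [integral_poissonMeasure] using (hasSum_natCast_poissonMeasure r).tsum_eq

theorem integral_natCast_sq_poissonMeasure (r : ℝ≥0) :
    ∫ n, (n : ℝ) ^ 2 ∂poissonMeasure r = (r : ℝ) ^ 2 + r := by
  simpa [integral_poissonMeasure] using (hasSum_natCast_sq_poissonMeasure r).tsum_eq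

theorem integrable_natCast_poissonMeasure (r : ℝ≥0) :
    Integrable (fun n : ℕ => (n : ℝ)) (poissonMeasure r) := by
  simpa [integrable_poissonMeasure_iff] using (hasSum_natCast_poissonMeasure r).summable

theorem integrable_natCast_sq_poissonMeasure (r : ℝ≥0) :
    Integrable (fun n : ℕ => (n : ℝ) ^ 2) (poissonMeasure r) := by
  simpa [integrable_poissonMeasure_iff] using (hasSum_natCast_sq_poissonMeasure r).summable

theorem measurable_poissonMeasure : Measurable poissonMeasure := by
  refine Measure.measurable_of_measurable_coe _ fun s hs => ?_
  simp only [poissonMeasure, Measure.sum_apply _ hs, Measure.smul_apply, smul_eq_mul]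
  exact Measurable.tsum fun n => by fun_prop

theorem MeasureTheory.Measure.integral_bind_of_nonneg {α β : Type*} [MeasurableSpace α]
    [MeasurableSpace β] {m : Measure α} {κ : α → Measure β} (hκ : AEMeasurable κ m) {f : β → ℝ}
    (hf : Measurable f) (hf_nonneg : 0 ≤ f) (hfi : ∀ᵐ a ∂m, Integrable f (κ a)) :
    ∫ b, f b ∂m.bind κ = ∫ a, ∫ b, f b ∂κ a ∂m := by
  have hlin : ∀ᵐ a ∂m, ENNReal.ofReal (∫ b, f b ∂κ a) = ∫⁻ b, ENNReal.ofReal (f b) ∂κ a := by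
    filter_upwards [hfi] with a ha
    exact ofReal_integral_eq_lintegral_ofReal ha (ae_of_all _ hf_nonneg)
  have hmeas : AEStronglyMeasurable (fun a => ∫ b, f b ∂κ a) m := by
    refine (((Measure.measurable_lintegral hf.ennreal_ofReal).comp_aemeasurable hκ).ennreal_toReal
      |>.congr ?_).aestronglyMeasurable
    filter_upwards [hlin] with a ha
    rw [Function.comp_apply, ← ha, ENNReal.toReal_ofReal (integral_nonneg hf_nonneg)]
  rw [integral_eq_lintegral_of_nonneg_ae (ae_of_all _ hf_nonneg) hf.aestronglyMeasurable,
    Measure.lintegral_bind hκ (by fun_prop),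
    integral_eq_lintegral_of_nonneg_ae (ae_of_all _ fun a => integral_nonneg hf_nonneg) hmeas,
    lintegral_congr_ae hlin]

theorem ae_nonneg_expMeasure (r : ℝ) : ∀ᵐ t ∂expMeasure r, 0 ≤ t := by
  rw [ae_iff]
  simp only [not_le, Iio_def]
  rw [expMeasure, gammaMeasure, withDensity_apply _ measurableSet_Iio]
  exact lintegral_exponentialPDF_of_nonpos le_rfl

theorem integral_expMeasure_eq_setIntegral {r : ℝ} (hr : 0 < r) (f : ℝ → ℝ) :
    ∫ t, f t ∂expMeasure r = ∫ t in Ioi 0, r * exp (-(r * t)) * f t := by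
  rw [expMeasure, gammaMeasure, integral_withDensity_eq_integral_toReal_smul (f := gammaPDF 1 r)
    (measurable_gammaPDFReal 1 r).ennreal_ofReal (ae_of_all _ fun _ => ENNReal.ofReal_lt_top),
    ← integral_Ici_eq_integral_Ioi, ← integral_indicator measurableSet_Ici]
  congr 1 with t
  change (exponentialPDF r t).toReal • f t = _
  by_cases ht : 0 ≤ t
  · rw [indicator_of_mem (mem_Ici.mpr ht), exponentialPDF_of_nonneg ht,
      ENNReal.toReal_ofReal (by positivity), smul_eq_mul]
  · rw [indicator_of_notMem (by simpa using ht), exponentialPDF_of_neg (not_le.mp ht),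
      ENNReal.toReal_zero, zero_smul]

theorem integral_exp_neg_mul_expMeasure {r a : ℝ} (hr : 0 < r) (ha : 0 < r + a) :
    ∫ t, exp (-(a * t)) ∂expMeasure r = r / (r + a) := by
  have h := integral_comp_mul_left_Ioi (fun t => exp (-t)) 0 ha
  simp only [mul_zero, integral_exp_neg_Ioi_zero, smul_eq_mul, mul_one] at h
  rw [integral_expMeasure_eq_setIntegral hr]
  simp_rw [mul_assoc, ← exp_add, ← neg_add, ← add_mul]
  rw [integral_const_mul, h, div_eq_mul_inv]

theorem integrable_exp_neg_mul_expMeasure {r a : ℝ} (hr : 0 < r) (ha : 0 < r + a) :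
    Integrable (fun t => exp (-(a * t))) (expMeasure r) :=
  .of_integral_ne_zero <| by rw [integral_exp_neg_mul_expMeasure hr ha]; positivity

theorem integral_quadratic_exp_neg_mul_expMeasure {r ρ : ℝ} (hr : 0 < r) (hρ : 0 < r + 2 * ρ)
    (a b c : ℝ) :
    ∫ t, a + b * exp (-(ρ * t)) + c * exp (-(ρ * t)) ^ 2 ∂expMeasure r =
      a + b * (r / (r + ρ)) + c * (r / (r + 2 * ρ)) := by
  have : IsProbabilityMeasure (expMeasure r) := isProbabilityMeasure_expMeasure hr
  have hρ₁ : 0 < r + ρ := by linarith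
  have hsq (t : ℝ) : exp (-(ρ * t)) ^ 2 = exp (-(2 * ρ * t)) := by
    rw [← exp_nat_mul]; ring_nf
  have hi₁ := (integrable_exp_neg_mul_expMeasure hr hρ₁).const_mul b
  have hi₂ := (integrable_exp_neg_mul_expMeasure hr hρ).const_mul c
  simp_rw [hsq]
  have hi₀₁ : Integrable (fun t => a + b * exp (-(ρ * t))) (expMeasure r) :=
    (integrable_const a).add hi₁
  rw [integral_add hi₀₁ hi₂, integral_add (integrable_const a) hi₁,
    integral_const, integral_const_mul, integral_const_mul, integral_exp_neg_mul_expMeasure hr hρ₁,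
    integral_exp_neg_mul_expMeasure hr hρ, probReal_univ, one_smul]

/-- Theorem 4 for a sample of size `n = 2`: conditionally on the coalescence time
`T ~ Exp(1)` of the two individuals, the size `G = |𝒢₁ ∪ 𝒢₂|` of the dispensable
genome is Poisson with parameter `(θ/ρ)(2 - e^{-ρT})`; its mean is
`θ(1/ρ + 1/(1+ρ)) = θ(1+2ρ)/(ρ(1+ρ))` and its variance is
`θ(1+2ρ)/(ρ(1+ρ)) + θ²/((1+ρ)²(1+2ρ))`. -/
theorem dispensable_genome_two_individuals (θ ρ : ℝ) (hθ : 0 < θ) (hρ : 0 < ρ)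
    (μ : Measure ℕ)
    (hμ : μ = (expMeasure 1).bind (fun t =>
      poissonMeasure ((θ / ρ * (2 - Real.exp (-ρ * t))).toNNReal))) :
    (∫ n : ℕ, (n : ℝ) ∂μ) = θ * (1 / ρ + 1 / (1 + ρ)) ∧
    (∫ n : ℕ, (n : ℝ) ∂μ) = θ * (1 + 2 * ρ) / (ρ * (1 + ρ)) ∧
    (∫ n : ℕ, (n : ℝ) ^ 2 ∂μ) - (∫ n : ℕ, (n : ℝ) ∂μ) ^ 2 =
      θ * (1 + 2 * ρ) / (ρ * (1 + ρ)) + θ ^ 2 / ((1 + ρ) ^ 2 * (1 + 2 * ρ)) := by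
  set q := θ / ρ
  set rate : ℝ → ℝ≥0 := fun t => (q * (2 - exp (-ρ * t))).toNNReal
  have hκ : AEMeasurable (fun t => poissonMeasure (rate t)) (expMeasure 1) :=
    (measurable_poissonMeasure.comp (by fun_prop)).aemeasurable
  have hrate : ∀ᵐ t ∂expMeasure 1, (rate t : ℝ) = q * (2 - exp (-(ρ * t))) := by
    filter_upwards [ae_nonneg_expMeasure 1] with t ht
    have : exp (-ρ * t) ≤ 1 := exp_le_one_iff.mpr (by nlinarith)
    rw [Real.coe_toNNReal _ (mul_nonneg (by positivity) (by linarith)), neg_mul]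
  have hmean : ∫ n, (n : ℝ) ∂μ = 2 * q + -q * (1 / (1 + ρ)) + 0 * (1 / (1 + 2 * ρ)) := by
    rw [hμ, Measure.integral_bind_of_nonneg hκ (by fun_prop) (fun n => n.cast_nonneg)
      (ae_of_all _ fun t => integrable_natCast_poissonMeasure _),
      ← integral_quadratic_exp_neg_mul_expMeasure one_pos (by positivity)]
    refine integral_congr_ae ?_
    filter_upwards [hrate] with t ht
    rw [integral_natCast_poissonMeasure, ht]
    ring
  have hsecond : ∫ n, (n : ℝ) ^ 2 ∂μ = (4 * q ^ 2 + 2 * q) + -(4 * q ^ 2 + q) * (1 / (1 + ρ)) +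
      q ^ 2 * (1 / (1 + 2 * ρ)) := by
    rw [hμ, Measure.integral_bind_of_nonneg hκ (by fun_prop) (fun n => by positivity)
      (ae_of_all _ fun t => integrable_natCast_sq_poissonMeasure _),
      ← integral_quadratic_exp_neg_mul_expMeasure one_pos (by positivity)]
    refine integral_congr_ae ?_
    filter_upwards [hrate] with t ht
    rw [integral_natCast_sq_poissonMeasure, ht]
    ring
  have : 1 + ρ ≠ 0 := by positivity
  have : 1 + 2 * ρ ≠ 0 := by positivity
  refine ⟨?_, ?_, ?_⟩ <;> simp only [hmean, hsecond, q] <;> field_simp <;> ring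
end
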